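/- Let G' be obtained from G by adding a vertex a adjacent to N ⊆ V. Every maximal clique of G either remains a maximal clique of G' or is contained in N and extends (by adding a) to a maximal clique of G'; in particular the set of maximal cliques of G' equals {C : C maximal clique of G, C ⊄ N} ∪ {C ∪ {a} : C maximal clique of G[N]} (where G[N] denotes the induced subgraph on N). -/

import Mathlib

/-- The graph obtained from `G` by adding one new vertex (`none`) adjacent exactly to the
vertices in `N`. -/
def extGraph {V : Type} (G : SimpleGraph V) (N : Set V) : SimpleGraph (Option V) where
  Adj x y :=
    match x, y with
    | some v, some w => G.Adj v w
    | some v, none => v ∈ N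
    | none, some w => w ∈ N
    | none, none => False
  symm := by
    constructor
    rintro (_ | v) (_ | w) h
    · exact h
    · exact h
    · exact h
    · exact h.symm
  loopless := by
    constructor
    rintro (_ | v) h
    · exact h
    · exact G.loopless.irrefl v h

/-- A maximal clique of a graph, as a vertex set. -/
def IsMaxCliqueSet {V : Type} (G : SimpleGraph V) (C : Set V) : Prop :=
  G.IsClique C ∧ ∀ D : Set V, G.IsClique D → C ⊆ D → D = C

/-- A maximal clique of the subgraph `G[N]` induced on `N`: a clique of `G` contained in
`N`, maximal among cliques contained in `N`. -/
def MaxCliqueWithin {V : Type} (G : SimpleGraph V) (N S : Set V) : Prop :=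
  G.IsClique S ∧ S ⊆ N ∧ ∀ T : Set V, G.IsClique T → T ⊆ N → S ⊆ T → T = S

/-!
A set of vertices of `G'` is `some '' C` or `insert a (some '' C)` according as it avoids or
contains the new vertex `a`. The first is a clique of `G'` iff `C` is a clique of `G`, the
second iff moreover `C ⊆ N`. Hence `some '' C` is maximal iff `C` is a maximal clique of `G`
that cannot be enlarged by `a`, i.e. `C ⊄ N`, and `insert a (some '' C)` is maximal iff `C`
is maximal among the cliques inside `N`.
-/

namespace Set

variable {α : Type*} {D : Set (Option α)}

theorem image_some_preimage_some_of_none_notMem (h : none ∉ D) : some '' (some ⁻¹' D) = D := by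
  ext (_ | x) <;> simp [h]

theorem insert_none_image_some_preimage_some (h : none ∈ D) :
    insert none (some '' (some ⁻¹' D)) = D := by
  ext (_ | x) <;> simp [h]

theorem insert_none_image_some_injective :
    Function.Injective fun S : Set α => insert none (some '' S) := fun S T h => by
  ext x
  simpa using congrArg (some x ∈ ·) h

end Set

section ExtGraph

variable {V : Type} {G : SimpleGraph V} {N : Set V} {C : Set V}

theorem extGraph_isClique_image_some_iff :
    (extGraph G N).IsClique (some '' C) ↔ G.IsClique C :=
  (Option.some_injective V).injOn.pairwise_image

theorem extGraph_isClique_insert_none_iff :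
    (extGraph G N).IsClique (insert none (some '' C)) ↔ G.IsClique C ∧ C ⊆ N := by
  rw [SimpleGraph.IsClique, Set.pairwise_insert, ← SimpleGraph.IsClique,
    extGraph_isClique_image_some_iff, Set.forall_mem_image]
  exact and_congr_right fun _ => ⟨fun h v hv => (h hv (by simp)).1, fun h v hv _ => ⟨h hv, h hv⟩⟩

theorem IsMaxCliqueSet.maxCliqueWithin (hC : IsMaxCliqueSet G C) (hCN : C ⊆ N) :
    MaxCliqueWithin G N C :=
  ⟨hC.1, hCN, fun T hT _ hCT => hC.2 T hT hCT⟩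

theorem isMaxCliqueSet_extGraph_image_some_iff :
    IsMaxCliqueSet (extGraph G N) (some '' C) ↔ IsMaxCliqueSet G C ∧ ¬ C ⊆ N := by
  constructor
  · rintro ⟨hC, hmax⟩
    have hC := extGraph_isClique_image_some_iff.1 hC
    refine ⟨⟨hC, fun D hD hCD => ?_⟩, fun hCN => ?_⟩
    · exact Set.image_injective.2 (Option.some_injective V)
        (hmax _ (extGraph_isClique_image_some_iff.2 hD) (Set.image_mono hCD))
    · have h := hmax _ (extGraph_isClique_insert_none_iff.2 ⟨hC, hCN⟩) (Set.subset_insert _ _)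
      have hn : none ∈ some '' C := h ▸ Set.mem_insert _ _
      simp at hn
  · rintro ⟨⟨hC, hmax⟩, hCN⟩
    refine ⟨extGraph_isClique_image_some_iff.2 hC, fun D hD hCD => ?_⟩
    -- `none` is adjacent to every vertex of `some '' C`, so it would force `C ⊆ N`.
    have hn : none ∉ D := fun hn =>
      hCN fun v hv => hD hn (hCD (Set.mem_image_of_mem _ hv)) (by simp)
    rw [← Set.image_some_preimage_some_of_none_notMem hn] at hD ⊢
    rw [hmax _ (extGraph_isClique_image_some_iff.1 hD) (Set.image_subset_iff.1 hCD)]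

theorem isMaxCliqueSet_extGraph_insert_none_iff :
    IsMaxCliqueSet (extGraph G N) (insert none (some '' C)) ↔ MaxCliqueWithin G N C := by
  constructor
  · rintro ⟨hC, hmax⟩
    obtain ⟨hC, hCN⟩ := extGraph_isClique_insert_none_iff.1 hC
    refine ⟨hC, hCN, fun T hT hTN hCT => Set.insert_none_image_some_injective ?_⟩
    exact hmax _ (extGraph_isClique_insert_none_iff.2 ⟨hT, hTN⟩)
      (Set.insert_subset_insert (Set.image_mono hCT))
  · rintro ⟨hC, hCN, hmax⟩
    refine ⟨extGraph_isClique_insert_none_iff.2 ⟨hC, hCN⟩, fun D hD hCD => ?_⟩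
    rw [← Set.insert_none_image_some_preimage_some (hCD (Set.mem_insert _ _))] at hD ⊢
    obtain ⟨hD, hDN⟩ := extGraph_isClique_insert_none_iff.1 hD
    rw [hmax _ hD hDN (Set.image_subset_iff.1 ((Set.subset_insert _ _).trans hCD))]

theorem isMaxCliqueSet_extGraph_iff {C' : Set (Option V)} :
    IsMaxCliqueSet (extGraph G N) C' ↔
      (∃ C : Set V, IsMaxCliqueSet G C ∧ ¬ C ⊆ N ∧ C' = some '' C) ∨
        ∃ C : Set V, MaxCliqueWithin G N C ∧ C' = insert none (some '' C) := by
  constructor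
  · intro h
    by_cases hn : none ∈ C'
    · rw [← Set.insert_none_image_some_preimage_some hn] at h ⊢
      exact .inr ⟨_, isMaxCliqueSet_extGraph_insert_none_iff.1 h, rfl⟩
    · rw [← Set.image_some_preimage_some_of_none_notMem hn] at h ⊢
      obtain ⟨hC, hCN⟩ := isMaxCliqueSet_extGraph_image_some_iff.1 h
      exact .inl ⟨_, hC, hCN, rfl⟩
  · rintro (⟨C, hC, hCN, rfl⟩ | ⟨C, hC, rfl⟩)
    · exact isMaxCliqueSet_extGraph_image_some_iff.2 ⟨hC, hCN⟩
    · exact isMaxCliqueSet_extGraph_insert_none_iff.2 hC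

end ExtGraph

/-- Every maximal clique of `G` either remains a maximal clique of the extended graph `G'`
or is contained in `N` and extends (by the new vertex `a = none`) to a maximal clique of
`G'`; moreover the maximal cliques of `G'` are exactly the maximal cliques of `G` not
contained in `N` together with the sets `C ∪ {a}` for `C` a maximal clique of `G[N]`. -/
theorem maxCliques_of_extended_graph
    {V : Type} (G : SimpleGraph V) (N : Set V) :
    (∀ C : Set V, IsMaxCliqueSet G C →
      IsMaxCliqueSet (extGraph G N) (some '' C) ∨
        (C ⊆ N ∧ IsMaxCliqueSet (extGraph G N) (insert none (some '' C))))
    ∧ (∀ C' : Set (Option V), IsMaxCliqueSet (extGraph G N) C' ↔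
        ((∃ C : Set V, IsMaxCliqueSet G C ∧ ¬ C ⊆ N ∧ C' = some '' C)
          ∨ (∃ C : Set V, MaxCliqueWithin G N C ∧ C' = insert none (some '' C)))) := by
  refine ⟨fun C hC => ?_, fun C' => isMaxCliqueSet_extGraph_iff⟩
  by_cases hCN : C ⊆ N
  · exact .inr ⟨hCN, isMaxCliqueSet_extGraph_insert_none_iff.2 (hC.maxCliqueWithin hCN)⟩
  · exact .inl (isMaxCliqueSet_extGraph_image_some_iff.2 ⟨hC, hCN⟩)
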